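/- arXiv:2003.09358 — 2 statements merged into one kernel-verified Lean document; each statement's English description precedes it below -/
import Mathlib

section
/- Let H(x) = tanh(x/√2), Y₁(x) = sech(x/√2)·tanh(x/√2) and Y₀(x) = −(1/√3)·sech(x/√2). Then the pair (φ, ψ) with φ(t,x) = Y₁(x)·sin(t·√(3/2)) and ψ(t,x) = Y₀(x)·cos(t·√(3/2)) satisfies the linearized Bäcklund system for φ⁴: for all (t,x) ∈ ℝ², ∂_x φ − ∂_t ψ = −√2·H(x)·φ and ∂_t φ − ∂_x ψ = −√2·H(x)·ψ. (The internal modes of 𝓛_H and of its dual 𝓛̃_H are connected by the linearized Bäcklund transformation.) -/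
/-- The φ⁴ kink. -/
noncomputable def phi4Kink (x : ℝ) : ℝ := Real.tanh (x / Real.sqrt 2)

/-- The internal mode of the linearized φ⁴ operator 𝓛_H. -/
noncomputable def Y₁ (x : ℝ) : ℝ :=
  (1 / Real.cosh (x / Real.sqrt 2)) * Real.tanh (x / Real.sqrt 2)

/-- The eigenfunction of the dual operator 𝓛̃_H with eigenvalue 3/2. -/
noncomputable def Y₀ (x : ℝ) : ℝ :=
  -(1 / Real.sqrt 3) * (1 / Real.cosh (x / Real.sqrt 2))

/-!
Separating variables, `(Y₁ x sin ωt, Y₀ x cos ωt)` with `ω = √(3/2)` solves the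
linearized Bäcklund system as soon as the profiles solve its stationary form
`Y₁' + ω Y₀ = -√2 H Y₁`, `ω Y₁ - Y₀' = -√2 H Y₀`. With `u = x/√2`, the chain rule and
`sech² = 1 - tanh²` give `Y₁' = sech u (1 - 2 tanh² u)/√2` and
`Y₀' = Y₁/√6`, after which both equations reduce to `ω = √3/√2`.
-/

open Real

namespace Real

theorem hasDerivAt_tanh (x : ℝ) : HasDerivAt tanh (1 / cosh x ^ 2) x := by
  have h := (hasDerivAt_sinh x).div (hasDerivAt_cosh x) (cosh_pos x).ne'
  rw [show tanh = sinh / cosh from funext tanh_eq_sinh_div_cosh]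
  refine h.congr_deriv ?_
  rw [show cosh x * cosh x - sinh x * sinh x = 1 by linear_combination cosh_sq x]

theorem hasDerivAt_one_div_cosh (x : ℝ) :
    HasDerivAt (fun y => 1 / cosh y) (-(1 / cosh x) * tanh x) x := by
  have h := (hasDerivAt_cosh x).inv (cosh_pos x).ne'
  simp only [one_div, ← Pi.inv_def]
  refine h.congr_deriv ?_
  rw [tanh_eq_sinh_div_cosh]
  field_simp

theorem one_div_cosh_sq (x : ℝ) : (1 / cosh x) ^ 2 = 1 - tanh x ^ 2 := by
  have := (cosh_pos x).ne'
  rw [tanh_eq_sinh_div_cosh]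
  field_simp
  linear_combination -cosh_sq x

end Real

theorem hasDerivAt_Y₁ (x : ℝ) :
    HasDerivAt Y₁ (1 / cosh (x / √2) * (1 - 2 * tanh (x / √2) ^ 2) / √2) x := by
  have hu := (hasDerivAt_id' x).div_const √2
  have h := ((hasDerivAt_one_div_cosh _).comp x hu).mul ((hasDerivAt_tanh _).comp x hu)
  refine h.congr_deriv ?_
  simp only [Function.comp_apply]
  linear_combination 1 / √2 * (1 / cosh (x / √2)) * one_div_cosh_sq (x / √2)

theorem hasDerivAt_Y₀ (x : ℝ) : HasDerivAt Y₀ (Y₁ x / (√3 * √2)) x := by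
  have hu := (hasDerivAt_id' x).div_const √2
  refine (((hasDerivAt_one_div_cosh _).comp x hu).const_mul (-(1 / √3))).congr_deriv ?_
  rw [Y₁]
  field_simp

theorem deriv_Y₁_add_mul_Y₀ (x : ℝ) :
    deriv Y₁ x + √(3 / 2) * Y₀ x = -√2 * phi4Kink x * Y₁ x := by
  have h2 : √2 ^ 2 = 2 := sq_sqrt (by norm_num)
  rw [(hasDerivAt_Y₁ x).deriv, sqrt_div' 3 (by norm_num : (0:ℝ) ≤ 2), Y₀, Y₁, phi4Kink]
  field_simp
  linear_combination tanh (x / √2) ^ 2 * h2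

theorem mul_Y₁_sub_deriv_Y₀ (x : ℝ) :
    √(3 / 2) * Y₁ x - deriv Y₀ x = -√2 * phi4Kink x * Y₀ x := by
  have h2 : √2 ^ 2 = 2 := sq_sqrt (by norm_num)
  have h3 : √3 ^ 2 = 3 := sq_sqrt (by norm_num)
  rw [(hasDerivAt_Y₀ x).deriv, sqrt_div' 3 (by norm_num : (0:ℝ) ≤ 2), Y₀, Y₁, phi4Kink]
  field_simp
  linear_combination tanh (x / √2) * (h3 - h2)

theorem linearizedBacklund_of_stationary {f g : ℝ → ℝ} {v ω x : ℝ}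
    (hf : DifferentiableAt ℝ f x) (hg : DifferentiableAt ℝ g x)
    (h₁ : deriv f x + ω * g x = v * f x)
    (h₂ : ω * f x - deriv g x = v * g x) (t : ℝ) :
    deriv (fun x' => f x' * sin (t * ω)) x - deriv (fun t' => g x * cos (t' * ω)) t
        = v * (f x * sin (t * ω))
      ∧ deriv (fun t' => f x * sin (t' * ω)) t - deriv (fun x' => g x' * cos (t * ω)) x
        = v * (g x * cos (t * ω)) := by
  have hsin := ((hasDerivAt_mul_const ω).sin (x := t)).const_mul (f x)
  have hcos := ((hasDerivAt_mul_const ω).cos (x := t)).const_mul (g x)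
  rw [deriv_mul_const hf, deriv_mul_const hg, hsin.deriv, hcos.deriv]
  constructor
  · linear_combination sin (t * ω) * h₁
  · linear_combination cos (t * ω) * h₂

/-- The pair (Y₁(x) sin(t√(3/2)), Y₀(x) cos(t√(3/2))) satisfies the
linearized Bäcklund system for φ⁴: the internal modes of 𝓛_H and its dual are connected
by the linearized Bäcklund transformation. -/
theorem internal_modes_linearized_backlund_phi4 :
    ∀ t x : ℝ,
      deriv (fun x' => Y₁ x' * Real.sin (t * Real.sqrt (3 / 2))) x
          - deriv (fun t' => Y₀ x * Real.cos (t' * Real.sqrt (3 / 2))) t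
        = -Real.sqrt 2 * phi4Kink x * (Y₁ x * Real.sin (t * Real.sqrt (3 / 2)))
      ∧ deriv (fun t' => Y₁ x * Real.sin (t' * Real.sqrt (3 / 2))) t
          - deriv (fun x' => Y₀ x' * Real.cos (t * Real.sqrt (3 / 2))) x
        = -Real.sqrt 2 * phi4Kink x * (Y₀ x * Real.cos (t * Real.sqrt (3 / 2))) :=
  fun t x => linearizedBacklund_of_stationary (hasDerivAt_Y₁ x).differentiableAt
    (hasDerivAt_Y₀ x).differentiableAt (deriv_Y₁_add_mul_Y₀ x) (mul_Y₁_sub_deriv_Y₀ x) t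
end

section
/- Let H(x) = tanh(x/√2), λ₀ = i·√(3/2) ∈ ℂ, and fix a sign ε ∈ {+1, −1}. Define M₄(t,x) = tanh(x/√2)·e^{i√2·t} and N₄(t,x) = (−2i − ε·√2·λ₀)·e^{i√2·t}. Then (M₄, N₄) satisfies, for all (t,x) ∈ ℝ², the system ∂_x M₄ − ∂_t N₄ = −(1/√2)·H(x)·M₄ − ε·λ₀·N₄ and ∂_t M₄ − ∂_x N₄ = −(1/√2)·H(x)·N₄ − ε·λ₀·M₄. (The odd resonance of the dual φ⁴ operator is linked by this second linearized Bäcklund transformation to the constant-in-space resonance N₄ of the free Klein-Gordon operator with mass 2.) -/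
/-- The time-periodic resonance of the dual φ⁴ operator 𝓛̃_H at λ = 2. -/
noncomputable def M₄c (t x : ℝ) : ℂ :=
  (Real.tanh (x / Real.sqrt 2) : ℂ) * Complex.exp (Complex.I * (Real.sqrt 2 : ℂ) * (t : ℂ))

open Complex

theorem Real.hasDerivAt_tanh_s18 (x : ℝ) : HasDerivAt Real.tanh (1 - Real.tanh x ^ 2) x := by
  have hquot := (Real.hasDerivAt_sinh x).div (Real.hasDerivAt_cosh x) (Real.cosh_pos x).ne'
  rw [show Real.sinh / Real.cosh = Real.tanh from
    funext fun y => (Real.tanh_eq_sinh_div_cosh y).symm] at hquot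
  refine hquot.congr_deriv ?_
  rw [Real.tanh_eq_sinh_div_cosh]
  field_simp

theorem hasDerivAt_phi4Kink (x : ℝ) :
    HasDerivAt phi4Kink ((1 - phi4Kink x ^ 2) / √2) x := by
  have hcomp := (Real.hasDerivAt_tanh_s18 (x / √2)).comp x ((hasDerivAt_id x).div_const √2)
  exact hcomp.congr_deriv (by simp only [phi4Kink]; ring)

theorem hasDerivAt_cexp_I_mul_ofReal (ω t : ℝ) :
    HasDerivAt (fun s : ℝ => cexp (I * ω * s)) (I * ω * cexp (I * ω * t)) t := by
  simpa [mul_comm] using (((hasDerivAt_id (t : ℂ)).const_mul (I * ω)).cexp).comp_ofReal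

theorem deriv_M₄c_space (t x : ℝ) :
    deriv (fun x' => M₄c t x') x = ((1 - phi4Kink x ^ 2) / √2 : ℝ) * cexp (I * √2 * t) :=
  ((hasDerivAt_phi4Kink x).ofReal_comp.mul_const _).deriv

theorem deriv_M₄c_time (t x : ℝ) :
    deriv (fun t' => M₄c t' x) t = I * √2 * M₄c t x := by
  change deriv (fun t' : ℝ => (phi4Kink x : ℂ) * cexp (I * √2 * t')) t = _
  rw [((hasDerivAt_cexp_I_mul_ofReal √2 t).const_mul (phi4Kink x : ℂ)).deriv, M₄c, phi4Kink]
  ring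

/-- `μ` stands for `±λ₀`; the sign and `λ₀` enter the system only through their product. -/
def SolvesSecondLinearizedBacklund (μ : ℂ) (φ ψ : ℝ → ℝ → ℂ) : Prop :=
  ∀ t x : ℝ,
    deriv (fun x' => φ t x') x - deriv (fun t' => ψ t' x) t
      = -(1 / √2 : ℝ) * (phi4Kink x : ℂ) * φ t x - μ * ψ t x
    ∧ deriv (fun t' => φ t' x) t - deriv (fun x' => ψ t x') x
      = -(1 / √2 : ℝ) * (phi4Kink x : ℂ) * ψ t x - μ * φ t x

theorem solvesSecondLinearizedBacklund_M₄c {μ : ℂ} (hμ : μ ^ 2 = -3 / 2) :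
    SolvesSecondLinearizedBacklund μ M₄c (fun t _ => (-2 * I - √2 * μ) * cexp (I * √2 * t)) := by
  intro t x
  have hNt := ((hasDerivAt_cexp_I_mul_ofReal √2 t).const_mul (-2 * I - √2 * μ)).deriv
  simp only [deriv_M₄c_space, deriv_M₄c_time, hNt, deriv_const]
  simp only [M₄c, phi4Kink, ofReal_div, ofReal_one, ofReal_sub, ofReal_pow]
  set s : ℂ := ((√2 : ℝ) : ℂ)
  have hs : s ^ 2 = 2 := by
    rw [← ofReal_pow, Real.sq_sqrt zero_le_two, ofReal_ofNat]
  have hs_inv : s⁻¹ = s / 2 := by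
    have hs0 : s ≠ 0 := ofReal_ne_zero.mpr (Real.sqrt_pos.mpr zero_lt_two).ne'
    field_simp
    exact hs.symm
  simp only [div_eq_mul_inv, hs_inv]
  set H : ℂ := ((Real.tanh (x * (√2)⁻¹) : ℝ) : ℂ)
  set e : ℂ := cexp (I * s * t)
  constructor
  · linear_combination e * I * μ * hs - e * s * hμ + 2 * e * s * I_sq
  · linear_combination -(H * e * μ / 2) * hs

/-- (M₄, N₄) with N₄ = (−2i − ε√2·λ₀)e^{i√2 t} satisfies the second
linearized Bäcklund system for φ⁴ with λ₀ = i√(3/2). -/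
theorem dual_resonance_second_linearized_backlund
    (ε : ℝ) (hε : ε = 1 ∨ ε = -1)
    (lam₀ : ℂ) (hlam₀ : lam₀ = Complex.I * (Real.sqrt (3 / 2) : ℂ))
    (N₄ : ℝ → ℝ → ℂ)
    (hN₄ : ∀ t x : ℝ, N₄ t x
      = (-2 * Complex.I - (ε : ℂ) * (Real.sqrt 2 : ℂ) * lam₀)
          * Complex.exp (Complex.I * (Real.sqrt 2 : ℂ) * (t : ℂ))) :
    ∀ t x : ℝ,
      deriv (fun x' => M₄c t x') x - deriv (fun t' => N₄ t' x) t
        = -(1 / Real.sqrt 2 : ℝ) * (phi4Kink x : ℂ) * M₄c t x - (ε : ℂ) * lam₀ * N₄ t x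
      ∧ deriv (fun t' => M₄c t' x) t - deriv (fun x' => N₄ t x') x
        = -(1 / Real.sqrt 2 : ℝ) * (phi4Kink x : ℂ) * N₄ t x - (ε : ℂ) * lam₀ * M₄c t x := by
  have hN₄_eq : N₄ = fun (t _ : ℝ) => (-2 * I - √2 * (ε * lam₀)) * cexp (I * √2 * t) := by
    funext t x
    rw [hN₄]
    ring
  have hε_sq : (ε : ℂ) ^ 2 = 1 := by
    rcases hε with rfl | rfl <;> norm_num
  have hμ : ((ε : ℂ) * lam₀) ^ 2 = -3 / 2 := by
    rw [hlam₀, mul_pow, mul_pow, hε_sq, I_sq, ← ofReal_pow, Real.sq_sqrt (by norm_num)]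
    push_cast
    ring
  subst hN₄_eq
  exact solvesSecondLinearizedBacklund_M₄c hμ
end
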